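/- Hennessy–Milner theorem for first-order modal ξ-calculus: if M and N are image-finite genealogical Kripke models, s ∈ S_M, t ∈ S_N, and for every FOMC-sentence φ one has M,s ⊨ φ if and only if N,t ⊨ φ, then the pointed models (M,s) and (N,t) are bisimilar. -/

import Mathlib

set_option linter.unusedVariables false

/-! Genealogical Kripke models and first-order modal ξ-calculus (FOMC). -/

/-- A genealogical Kripke model over a fixed type `W` of possible worlds,
propositional letters `P` and constant symbols `C`.  The children models are
given by an index type `ι` with a family `child : ι → GKM W P C`. -/
inductive GKM (W P C : Type) : Type 1 where
  | mk (S : Set W) (Sne : S.Nonempty) (R : W → W → Prop) (V : P → Set W)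
      (ι : Type) (child : ι → GKM W P C)
      (I : W → C → Option ι) (T : W → ι → W) : GKM W P C

namespace GKM

variable {W P C : Type}

def S : GKM W P C → Set W
  | .mk S _ _ _ _ _ _ _ => S

def R : GKM W P C → W → W → Prop
  | .mk _ _ R _ _ _ _ _ => R

def V : GKM W P C → P → Set W
  | .mk _ _ _ V _ _ _ _ => V

/-- The index type of the set of children models. -/
def Idx : GKM W P C → Type
  | .mk _ _ _ _ ι _ _ _ => ι

def child : (M : GKM W P C) → M.Idx → GKM W P C
  | .mk _ _ _ _ _ c _ _ => c

def I : (M : GKM W P C) → W → C → Option M.Idx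
  | .mk _ _ _ _ _ _ I _ => I

def T : (M : GKM W P C) → W → M.Idx → W
  | .mk _ _ _ _ _ _ _ T => T

/-- `IsChild M' M` : `M'` is a member of the set `N_M` of children models of `M`. -/
def IsChild (M' M : GKM W P C) : Prop := ∃ a, M.child a = M'

theorem acc_isChild (M : GKM W P C) : Acc IsChild M := by
  induction M with
  | mk S ne R V ι c I T ih =>
    refine Acc.intro _ fun M' h => ?_
    obtain ⟨a, ha⟩ := h
    subst ha
    exact ih a

theorem isChild_wf : WellFounded (@IsChild W P C) := ⟨acc_isChild⟩

instance : WellFoundedRelation (GKM W P C) :=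
  ⟨Relation.TransGen IsChild, isChild_wf.transGen⟩

/-- Hereditary well-formedness: `R ⊆ S × S` and `T(s,N') ∈ S_{N'}`, recursively. -/
def WF (M : GKM W P C) : Prop :=
  (∀ u u', M.R u u' → u ∈ M.S ∧ u' ∈ M.S) ∧
  (∀ s ∈ M.S, ∀ a : M.Idx, M.T s a ∈ (M.child a).S) ∧
  (∀ a : M.Idx, WF (M.child a))
termination_by M
decreasing_by exact Relation.TransGen.single ⟨_, rfl⟩

/-- Finitely many children, hereditarily. -/
def ChildFin (M : GKM W P C) : Prop :=
  Finite M.Idx ∧ ∀ a : M.Idx, ChildFin (M.child a)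
termination_by M
decreasing_by exact Relation.TransGen.single ⟨_, rfl⟩

/-- Image-finite genealogical Kripke model. -/
def ImageFinite (M : GKM W P C) : Prop :=
  (∀ s ∈ M.S, {t | M.R s t}.Finite) ∧ Finite M.Idx ∧
    ∀ a : M.Idx, ImageFinite (M.child a)
termination_by M
decreasing_by exact Relation.TransGen.single ⟨_, rfl⟩

end GKM

/-- Formulas of first-order modal ξ-calculus.  Model variables and formula
variables are both encoded as natural numbers (in separate namespaces).
`qmv φ x` is `¿φ?x`, `qmc φ c` is `¿φ?c`, `all x φ` is `∀x.φ` and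
`xi X φ` is `ξX.φ`. -/
inductive Fm (P C : Type) : Type where
  | fvar : ℕ → Fm P C
  | top : Fm P C
  | prop : P → Fm P C
  | qmv : Fm P C → ℕ → Fm P C
  | qmc : Fm P C → C → Fm P C
  | neg : Fm P C → Fm P C
  | and : Fm P C → Fm P C → Fm P C
  | box : Fm P C → Fm P C
  | all : ℕ → Fm P C → Fm P C
  | xi : ℕ → Fm P C → Fm P C

namespace Fm

variable {P C : Type}

/-- `∃x.φ := ¬∀x.¬φ`. -/
def exi (x : ℕ) (φ : Fm P C) : Fm P C := .neg (.all x (.neg φ))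

/-- `◇φ := ¬□¬φ`. -/
def dia (φ : Fm P C) : Fm P C := .neg (.box (.neg φ))

/-- Free model variables. -/
def fmv : Fm P C → Finset ℕ
  | .fvar _ => ∅
  | .top => ∅
  | .prop _ => ∅
  | .qmv φ x => fmv φ ∪ {x}
  | .qmc φ _ => fmv φ
  | .neg φ => fmv φ
  | .and φ ψ => fmv φ ∪ fmv ψ
  | .box φ => fmv φ
  | .all x φ => fmv φ \ {x}
  | .xi _ φ => fmv φ

/-- Formula variables with a free occurrence *outside* every `¿ ?` pair.
Such occurrences are never bound by `ξ`. -/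
def ffvOut : Fm P C → Finset ℕ
  | .fvar X => {X}
  | .top => ∅
  | .prop _ => ∅
  | .qmv _ _ => ∅
  | .qmc _ _ => ∅
  | .neg φ => ffvOut φ
  | .and φ ψ => ffvOut φ ∪ ffvOut ψ
  | .box φ => ffvOut φ
  | .all _ φ => ffvOut φ
  | .xi _ φ => ffvOut φ

/-- Formula variables with a free occurrence *inside* some `¿ ?` pair
(these are the occurrences a surrounding `ξX.` can bind). -/
def ffvIn : Fm P C → Finset ℕ
  | .fvar _ => ∅
  | .top => ∅
  | .prop _ => ∅
  | .qmv φ _ => ffvOut φ ∪ ffvIn φ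
  | .qmc φ _ => ffvOut φ ∪ ffvIn φ
  | .neg φ => ffvIn φ
  | .and φ ψ => ffvIn φ ∪ ffvIn ψ
  | .box φ => ffvIn φ
  | .all _ φ => ffvIn φ
  | .xi X φ => ffvIn φ \ {X}

/-- Free formula variables. -/
def ffv (φ : Fm P C) : Finset ℕ := ffvOut φ ∪ ffvIn φ

/-- The extra subformula conditions of Definition 2.3. -/
def Good : Fm P C → Prop
  | .fvar _ => True
  | .top => True
  | .prop _ => True
  | .qmv φ _ => fmv φ = ∅ ∧ Good φ
  | .qmc φ _ => fmv φ = ∅ ∧ Good φ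
  | .neg φ => Good φ
  | .and φ ψ => Good φ ∧ Good ψ
  | .box φ => Good φ
  | .all _ φ => Good φ
  | .xi X φ => fmv (Fm.xi X φ) = ∅ ∧ ffv (Fm.xi X φ) = ∅ ∧ Good φ

/-- FOMC-sentences (Definition 2.3). -/
def IsSentence (φ : Fm P C) : Prop := fmv φ = ∅ ∧ ffv φ = ∅ ∧ Good φ

end Fm

namespace GKM

variable {W P C : Type}

mutual

/-- Semantics (Definition 2.11).  `i` interprets model variables as children
models of the current model (via their indices), and `j` interprets formula
variables semantically, as maps assigning to each genealogical Kripke model a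
set of worlds. -/
def eval : (φ : Fm P C) → (M : GKM W P C) → (ℕ → Option M.Idx) →
    (ℕ → Option (GKM W P C → Set W)) → Set W
  | .fvar X, M, _, j => M.S ∩ ((j X).elim ∅ fun F => F M)
  | .top, M, _, _ => M.S
  | .prop p, M, _, _ => M.S ∩ M.V p
  | .qmv φ x, M, i, j =>
      {s | s ∈ M.S ∧ ∃ a, i x = some a ∧
        M.T s a ∈ eval φ (M.child a) (fun _ => none) j}
  | .qmc φ c, M, _, j =>
      {s | s ∈ M.S ∧ ∃ a, M.I s c = some a ∧
        M.T s a ∈ eval φ (M.child a) (fun _ => none) j}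
  | .neg φ, M, i, j => M.S \ eval φ M i j
  | .and φ ψ, M, i, j => eval φ M i j ∩ eval ψ M i j
  | .box φ, M, i, j => {s | s ∈ M.S ∧ ∀ t, M.R s t → t ∈ eval φ M i j}
  | .all x φ, M, i, j =>
      {s | s ∈ M.S ∧ ∀ a : M.Idx, s ∈ eval φ M (Function.update i x (some a)) j}
  | .xi X φ, M, i, j => eval φ M i (Function.update j X (some (fun N => xiClosure φ X j N)))
  termination_by φ M i j => (sizeOf φ, 1)

/-- The semantic value bound to `X` by `ξX.φ` under environment `j`: the
(depth-guarded) fixed point `F` with `F N = ⟦φ⟧^N_{∅, j[X:=F]}`. -/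
def xiClosure (φ : Fm P C) (X : ℕ) (j : ℕ → Option (GKM W P C → Set W))
    (N₀ : GKM W P C) : Set W :=
  WellFounded.fix (isChild_wf.transGen)
    (fun N rec =>
      eval φ N (fun _ => none) (Function.update j X (some fun N' =>
        @dite (Set W) (Relation.TransGen IsChild N' N) (Classical.dec _)
          (fun h => rec N' h) (fun _ => ∅))))
    N₀
  termination_by (sizeOf φ, 2)

end

/-- `M,s ⊨ φ` : truth of the FOMC-sentence `φ` at the pointed model `M,s`. -/
def Sat (M : GKM W P C) (s : W) (φ : Fm P C) : Prop :=
  s ∈ eval φ M (fun _ => none) (fun _ => none)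

/-- Environments arising from binding sentences `ξX.ψ` (used for the
intermediate stages of evaluating an FOMC-sentence). -/
inductive GoodEnv : (ℕ → Option (GKM W P C → Set W)) → Prop where
  | nil : GoodEnv (fun _ => none)
  | cons {j : ℕ → Option (GKM W P C → Set W)} {X : ℕ} {ψ : Fm P C} :
      GoodEnv j → (Fm.xi X ψ).IsSentence →
      GoodEnv (Function.update j X (some (xiClosure ψ X j)))

/-- Bisimilarity of pointed genealogical Kripke models (Definition 4.2). -/
def Bisim (M : GKM W P C) (s : W) (N : GKM W P C) (t : W) : Prop :=
  ∃ (Z : W → W → Prop) (f : W → W → M.Idx → N.Idx → Prop),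
    Z s t ∧
    (∀ u v, Z u v → u ∈ M.S ∧ v ∈ N.S) ∧
    (∀ u v, Z u v → ∀ p : P, u ∈ M.V p ↔ v ∈ N.V p) ∧
    (∀ u v, Z u v → ∀ a : M.Idx, ∃ b : N.Idx, f u v a b) ∧
    (∀ u v, Z u v → ∀ b : N.Idx, ∃ a : M.Idx, f u v a b) ∧
    (∀ u v, Z u v → ∀ a b, f u v a b →
      Bisim (M.child a) (M.T u a) (N.child b) (N.T v b)) ∧
    (∀ u v, Z u v → ∀ c : C,
      (M.I u c = none ∧ N.I v c = none) ∨
      (∃ a b, M.I u c = some a ∧ N.I v c = some b ∧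
        Bisim (M.child a) (M.T u a) (N.child b) (N.T v b))) ∧
    (∀ u v, Z u v → ∀ u', M.R u u' →
      ∃ v', N.R v v' ∧ Z u' v' ∧ ∀ a b, f u v a b → f u' v' a b) ∧
    (∀ u v, Z u v → ∀ v', N.R v v' →
      ∃ u', M.R u u' ∧ Z u' v' ∧ ∀ a b, f u v a b → f u' v' a b)
termination_by M
decreasing_by all_goals exact Relation.TransGen.single ⟨_, rfl⟩

/-- The conditions of Definition 4.2 for a specific pair `(Z, f)` of witnesses. -/
def IsBisim (M N : GKM W P C) (Z : W → W → Prop)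
    (f : W → W → M.Idx → N.Idx → Prop) : Prop :=
  (∀ u v, Z u v → u ∈ M.S ∧ v ∈ N.S) ∧
  (∀ u v, Z u v → ∀ p : P, u ∈ M.V p ↔ v ∈ N.V p) ∧
  (∀ u v, Z u v → ∀ a : M.Idx, ∃ b : N.Idx, f u v a b) ∧
  (∀ u v, Z u v → ∀ b : N.Idx, ∃ a : M.Idx, f u v a b) ∧
  (∀ u v, Z u v → ∀ a b, f u v a b →
    Bisim (M.child a) (M.T u a) (N.child b) (N.T v b)) ∧
  (∀ u v, Z u v → ∀ c : C,
    (M.I u c = none ∧ N.I v c = none) ∨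
    (∃ a b, M.I u c = some a ∧ N.I v c = some b ∧
      Bisim (M.child a) (M.T u a) (N.child b) (N.T v b))) ∧
  (∀ u v, Z u v → ∀ u', M.R u u' →
    ∃ v', N.R v v' ∧ Z u' v' ∧ ∀ a b, f u v a b → f u' v' a b) ∧
  (∀ u v, Z u v → ∀ v', N.R v v' →
    ∃ u', M.R u u' ∧ Z u' v' ∧ ∀ a b, f u v a b → f u' v' a b)

/-- `n`-fold relational composition. -/
def relPow (r : W → W → Prop) : ℕ → W → W → Prop
  | 0 => fun a b => a = b
  | n + 1 => fun a c => ∃ b, relPow r n a b ∧ r b c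

/-- Standard Kripke semantics on the frame `(S_M, R_M)` with valuation `V_M`
(meaningful for pure propositional modal formulas). -/
def kEval (M : GKM W P C) : Fm P C → Set W
  | .top => M.S
  | .prop p => M.S ∩ M.V p
  | .neg φ => M.S \ kEval M φ
  | .and φ ψ => kEval M φ ∩ kEval M ψ
  | .box φ => {s | s ∈ M.S ∧ ∀ t, M.R s t → t ∈ kEval M φ}
  | _ => ∅

end GKM

/-- Pure propositional modal formulas. -/
def Fm.Pure {P C : Type} : Fm P C → Prop
  | .top => True
  | .prop _ => True
  | .neg φ => Pure φ
  | .and φ ψ => Pure φ ∧ Pure ψ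
  | .box φ => Pure φ
  | _ => False

/-!
The proof follows the classical Hennessy–Milner argument: relate two worlds when they satisfy
the same sentences. If a successor of `u` had no equivalent successor of `v`, choosing for each of
the finitely many successors of `v` a sentence separating it from `u'` and taking `◇` of their
conjunction would separate `u` from `v`.

Children models are handled by naming them with model variables. Starting from `s` and `t`, one
successively assigns fresh model variables to pairs `(a, b)` of children so that `s` and `t` still
agree on all sentences in the expanded language; for a given `a` a suitable `b` exists because
otherwise `∃x. ⋀_b ψ_b` would separate `s` from `t`. Once every child of either model is named,
`f` relates `a` and `b` when one variable names both; the formulas `¿φ?x` and `¿φ?c` then show that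
related children satisfy the same sentences, and they are bisimilar by induction on generation
depth.
-/

namespace Fm

variable {P C : Type}

def IsSentenceIn (φ : Fm P C) (D : Set ℕ) : Prop :=
  φ.Good ∧ φ.ffv = ∅ ∧ ↑φ.fmv ⊆ D

def conj (l : List (Fm P C)) : Fm P C := l.foldr .and .top

noncomputable def iConj {ι : Type} [Fintype ι] (F : ι → Fm P C) : Fm P C :=
  conj (Finset.univ.toList.map F)

theorem isSentenceIn_empty {φ : Fm P C} : φ.IsSentenceIn ∅ ↔ φ.IsSentence := by
  simp only [IsSentenceIn, IsSentence, Set.subset_empty_iff, Finset.coe_eq_empty]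
  tauto

namespace IsSentenceIn

variable {D : Set ℕ} {φ ψ : Fm P C}

theorem top : (Fm.top : Fm P C).IsSentenceIn D := by
  simp [IsSentenceIn, Good, ffv, ffvOut, ffvIn, fmv]

theorem prop (p : P) : (Fm.prop p : Fm P C).IsSentenceIn D := by
  simp [IsSentenceIn, Good, ffv, ffvOut, ffvIn, fmv]

theorem neg (h : φ.IsSentenceIn D) : φ.neg.IsSentenceIn D := h

theorem dia (h : φ.IsSentenceIn D) : φ.dia.IsSentenceIn D := h

theorem and (hφ : φ.IsSentenceIn D) (hψ : ψ.IsSentenceIn D) : (φ.and ψ).IsSentenceIn D := by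
  obtain ⟨hφg, hφf, hφm⟩ := hφ
  obtain ⟨hψg, hψf, hψm⟩ := hψ
  simp only [ffv, Finset.union_eq_empty] at hφf hψf
  refine ⟨⟨hφg, hψg⟩, ?_, ?_⟩
  · simp [ffv, ffvOut, ffvIn, hφf, hψf]
  · simpa [fmv] using And.intro hφm hψm

theorem exi {k : ℕ} (h : φ.IsSentenceIn (insert k D)) : (φ.exi k).IsSentenceIn D := by
  refine ⟨h.1, h.2.1, ?_⟩
  rw [show (φ.exi k).fmv = φ.fmv \ {k} from rfl, Finset.coe_sdiff, Finset.coe_singleton,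
    Set.sdiff_subset_iff, ← Set.insert_eq]
  exact h.2.2

theorem conj {l : List (Fm P C)} (h : ∀ φ ∈ l, φ.IsSentenceIn D) : (conj l).IsSentenceIn D := by
  induction l with
  | nil => exact top
  | cons φ l ih => exact (h φ (by simp)).and (ih fun ψ hψ => h ψ (by simp [hψ]))

theorem iConj {ι : Type} [Fintype ι] {F : ι → Fm P C} (h : ∀ i, (F i).IsSentenceIn D) :
    (iConj F).IsSentenceIn D :=
  IsSentenceIn.conj (by simpa using h)

theorem qmv (h : φ.IsSentence) {n : ℕ} (hn : n ∈ D) : (φ.qmv n).IsSentenceIn D := by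
  obtain ⟨hm, hf, hg⟩ := h
  refine ⟨⟨hm, hg⟩, ?_, ?_⟩
  · simpa [ffv, ffvOut, ffvIn] using hf
  · simpa [fmv, hm] using hn

theorem qmc (h : φ.IsSentence) (c : C) : (φ.qmc c).IsSentenceIn D := by
  obtain ⟨hm, hf, hg⟩ := h
  refine ⟨⟨hm, hg⟩, ?_, ?_⟩
  · simpa [ffv, ffvOut, ffvIn] using hf
  · simp [fmv, hm]

end IsSentenceIn

end Fm

namespace GKM

variable {W P C : Type}

section Semantics

variable {M : GKM W P C} {i : ℕ → Option M.Idx} {j : ℕ → Option (GKM W P C → Set W)} {x : W}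
  {φ ψ : Fm P C}

theorem mem_eval_top : x ∈ eval .top M i j ↔ x ∈ M.S := by
  rw [eval]

theorem mem_eval_prop {p : P} : x ∈ eval (.prop p) M i j ↔ x ∈ M.S ∧ x ∈ M.V p := by
  rw [eval]; rfl

theorem mem_eval_neg : x ∈ eval φ.neg M i j ↔ x ∈ M.S ∧ x ∉ eval φ M i j := by
  rw [eval]; rfl

theorem mem_eval_and : x ∈ eval (φ.and ψ) M i j ↔ x ∈ eval φ M i j ∧ x ∈ eval ψ M i j := by
  rw [eval]; rfl

theorem mem_eval_box : x ∈ eval φ.box M i j ↔ x ∈ M.S ∧ ∀ t, M.R x t → t ∈ eval φ M i j := by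
  rw [eval]; rfl

theorem mem_eval_all {n : ℕ} :
    x ∈ eval (.all n φ) M i j ↔ x ∈ M.S ∧ ∀ a, x ∈ eval φ M (Function.update i n (some a)) j := by
  rw [eval]; rfl

theorem mem_eval_qmv {n : ℕ} : x ∈ eval (φ.qmv n) M i j ↔
    x ∈ M.S ∧ ∃ a, i n = some a ∧ M.T x a ∈ eval φ (M.child a) (fun _ => none) j := by
  rw [eval]; rfl

theorem mem_eval_qmc {c : C} : x ∈ eval (φ.qmc c) M i j ↔
    x ∈ M.S ∧ ∃ a, M.I x c = some a ∧ M.T x a ∈ eval φ (M.child a) (fun _ => none) j := by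
  rw [eval]; rfl

theorem mem_eval_exi {n : ℕ} :
    x ∈ eval (φ.exi n) M i j ↔ x ∈ M.S ∧ ∃ a, x ∈ eval φ M (Function.update i n (some a)) j := by
  simp only [Fm.exi, mem_eval_neg, mem_eval_all]
  by_cases hx : x ∈ M.S <;> simp [hx]

theorem mem_eval_dia :
    x ∈ eval φ.dia M i j ↔ x ∈ M.S ∧ ∃ t, M.R x t ∧ (t ∈ M.S → t ∈ eval φ M i j) := by
  simp only [Fm.dia, mem_eval_neg, mem_eval_box]
  by_cases hx : x ∈ M.S <;> simp [hx]

theorem mem_eval_conj {l : List (Fm P C)} :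
    x ∈ eval (Fm.conj l) M i j ↔ x ∈ M.S ∧ ∀ φ ∈ l, x ∈ eval φ M i j := by
  induction l with
  | nil => simp [Fm.conj, mem_eval_top]
  | cons φ l ih =>
    rw [Fm.conj, List.foldr_cons, mem_eval_and, ← Fm.conj, ih]
    simp only [List.mem_cons, forall_eq_or_imp]
    tauto

theorem mem_eval_iConj {ι : Type} [Fintype ι] {F : ι → Fm P C} :
    x ∈ eval (Fm.iConj F) M i j ↔ x ∈ M.S ∧ ∀ k, x ∈ eval (F k) M i j := by
  simp [Fm.iConj, mem_eval_conj]

end Semantics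

def SentenceEquiv (M : GKM W P C) (s : W) (N : GKM W P C) (t : W) : Prop :=
  ∀ φ : Fm P C, φ.IsSentence → (M.Sat s φ ↔ N.Sat t φ)

/-- Agreement on sentences of the language expanded by model variables, the variable `n` naming
the child `(e n).1` of `M` and the child `(e n).2` of `N`. -/
def SentenceEquivUnder (M N : GKM W P C) (e : ℕ → Option (M.Idx × N.Idx)) (u v : W) : Prop :=
  ∀ φ : Fm P C, φ.IsSentenceIn {n | (e n).isSome} →
    (u ∈ eval φ M (Option.map Prod.fst ∘ e) (fun _ => none) ↔
      v ∈ eval φ N (Option.map Prod.snd ∘ e) (fun _ => none))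

variable {M N : GKM W P C} {e : ℕ → Option (M.Idx × N.Idx)} {u v : W}

theorem SentenceEquiv.sentenceEquivUnder_none {s t : W} (h : SentenceEquiv M s N t) :
    SentenceEquivUnder M N (fun _ => none) s t :=
  fun φ hφ => h φ (Fm.isSentenceIn_empty.1 (by simpa using hφ))

theorem sentenceEquivUnder_swap_iff :
    SentenceEquivUnder N M (Option.map Prod.swap ∘ e) v u ↔ SentenceEquivUnder M N e u v := by
  simp only [SentenceEquivUnder, Function.comp_def, Option.isSome_map, Option.map_map,
    Prod.fst_swap, Prod.snd_swap]
  exact forall_congr' fun φ => imp_congr_right fun _ => Iff.comm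

theorem setOf_isSome_update {α : Type} (e : ℕ → Option α) (k : ℕ) (p : α) :
    {n | (Function.update e k (some p) n).isSome} = insert k {n | (e n).isSome} := by
  ext n
  by_cases hn : n = k <;> simp [hn]

theorem exists_distinguishing_of_not_sentenceEquivUnder (hu : u ∈ M.S)
    (h : ¬ SentenceEquivUnder M N e u v) :
    ∃ φ : Fm P C, φ.IsSentenceIn {n | (e n).isSome} ∧
      u ∈ eval φ M (Option.map Prod.fst ∘ e) (fun _ => none) ∧
      v ∉ eval φ N (Option.map Prod.snd ∘ e) (fun _ => none) := by
  simp only [SentenceEquivUnder, not_forall, exists_prop, iff_iff_implies_and_implies,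
    not_and_or] at h
  obtain ⟨φ, hφ, ⟨hu', hv'⟩ | ⟨hv', hu'⟩⟩ := h
  · exact ⟨φ, hφ, hu', hv'⟩
  · exact ⟨φ.neg, hφ.neg, mem_eval_neg.2 ⟨hu, hu'⟩, fun h' => (mem_eval_neg.1 h').2 hv'⟩

namespace SentenceEquivUnder

theorem exists_update_left [Finite N.Idx] (hu : u ∈ M.S) (h : SentenceEquivUnder M N e u v)
    (k : ℕ) (a : M.Idx) :
    ∃ b, SentenceEquivUnder M N (Function.update e k (some (a, b))) u v := by
  by_contra! hne
  have := Fintype.ofFinite N.Idx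
  choose ψ hψ hψu hψv using fun b => exists_distinguishing_of_not_sentenceEquivUnder hu (hne b)
  simp only [setOf_isSome_update, Function.comp_update, Option.map_some] at hψ hψu hψv
  have hχ := h (.exi k (.iConj ψ)) (Fm.IsSentenceIn.iConj hψ).exi
  obtain ⟨-, b, hb⟩ := mem_eval_exi.1 (hχ.1 (mem_eval_exi.2 ⟨hu, a, mem_eval_iConj.2 ⟨hu, hψu⟩⟩))
  exact hψv b ((mem_eval_iConj.1 hb).2 b)

theorem exists_update_right [Finite M.Idx] (hv : v ∈ N.S) (h : SentenceEquivUnder M N e u v)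
    (k : ℕ) (b : N.Idx) :
    ∃ a, SentenceEquivUnder M N (Function.update e k (some (a, b))) u v := by
  obtain ⟨a, ha⟩ := (sentenceEquivUnder_swap_iff.2 h).exists_update_left hv k b
  refine ⟨a, sentenceEquivUnder_swap_iff.1 ?_⟩
  simpa [Function.comp_update] using ha

theorem exists_update [Finite M.Idx] [Finite N.Idx] (hu : u ∈ M.S) (hv : v ∈ N.S)
    (h : SentenceEquivUnder M N e u v) (k : ℕ) (x : M.Idx ⊕ N.Idx) :
    ∃ a b, (x = .inl a ∨ x = .inr b) ∧
      SentenceEquivUnder M N (Function.update e k (some (a, b))) u v := by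
  cases x with
  | inl a =>
    obtain ⟨b, hb⟩ := h.exists_update_left hu k a
    exact ⟨a, b, .inl rfl, hb⟩
  | inr b =>
    obtain ⟨a, ha⟩ := h.exists_update_right hv k b
    exact ⟨a, b, .inr rfl, ha⟩

theorem exists_covering [Finite M.Idx] [Finite N.Idx] (hu : u ∈ M.S) (hv : v ∈ N.S)
    (h : SentenceEquivUnder M N (fun _ => none) u v) (l : List (M.Idx ⊕ N.Idx)) :
    ∃ e, SentenceEquivUnder M N e u v ∧ (∀ n, l.length ≤ n → e n = none) ∧
      ∀ x ∈ l, ∃ n a b, e n = some (a, b) ∧ (x = .inl a ∨ x = .inr b) := by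
  induction l with
  | nil => exact ⟨_, h, fun _ _ => rfl, by simp⟩
  | cons x l ih =>
    obtain ⟨e, he, hfresh, hcov⟩ := ih
    obtain ⟨a, b, hx, he'⟩ := he.exists_update hu hv l.length x
    refine ⟨_, he', fun n hn => ?_, ?_⟩
    · simp only [List.length_cons] at hn
      rw [Function.update_of_ne (by omega)]
      exact hfresh n (by omega)
    · rintro y (_ | ⟨_, hy⟩)
      · exact ⟨l.length, a, b, Function.update_self .., hx⟩
      · obtain ⟨n, a', b', hn, hy⟩ := hcov y hy
        have hne : n ≠ l.length := fun h => by simp [h, hfresh] at hn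
        exact ⟨n, a', b', by rw [Function.update_of_ne hne, hn], hy⟩

theorem exists_total [Finite M.Idx] [Finite N.Idx] (hu : u ∈ M.S) (hv : v ∈ N.S)
    (h : SentenceEquivUnder M N (fun _ => none) u v) :
    ∃ e, SentenceEquivUnder M N e u v ∧ (∀ a, ∃ n b, e n = some (a, b)) ∧
      ∀ b, ∃ n a, e n = some (a, b) := by
  have := Fintype.ofFinite M.Idx
  have := Fintype.ofFinite N.Idx
  obtain ⟨e, he, -, hcov⟩ := h.exists_covering hu hv Finset.univ.toList
  refine ⟨e, he, fun a => ?_, fun b => ?_⟩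
  · obtain ⟨n, a', b, hn, hx⟩ := hcov (.inl a) (by simp)
    obtain rfl : a = a' := by simpa using hx
    exact ⟨n, b, hn⟩
  · obtain ⟨n, a, b', hn, hx⟩ := hcov (.inr b) (by simp)
    obtain rfl : b = b' := by simpa using hx
    exact ⟨n, a, hn⟩

theorem exists_rel {u' : W} (hfin : {t | N.R v t}.Finite) (hRS : ∀ t, N.R v t → t ∈ N.S)
    (hu : u ∈ M.S) (hu' : u' ∈ M.S) (h : SentenceEquivUnder M N e u v) (hR : M.R u u') :
    ∃ v', N.R v v' ∧ SentenceEquivUnder M N e u' v' := by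
  by_contra! hne
  have := hfin.fintype
  choose ψ hψ hψu hψv using fun t : {t | N.R v t} =>
    exists_distinguishing_of_not_sentenceEquivUnder hu' (hne t t.2)
  have hχ := h (.dia (.iConj ψ)) (Fm.IsSentenceIn.iConj hψ).dia
  obtain ⟨-, t, ht, htψ⟩ :=
    mem_eval_dia.1 (hχ.1 (mem_eval_dia.2 ⟨hu, u', hR, fun _ => mem_eval_iConj.2 ⟨hu', hψu⟩⟩))
  exact hψv ⟨t, ht⟩ ((mem_eval_iConj.1 (htψ (hRS t ht))).2 ⟨t, ht⟩)

theorem mem_V_iff (hu : u ∈ M.S) (hv : v ∈ N.S) (h : SentenceEquivUnder M N e u v) (p : P) :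
    u ∈ M.V p ↔ v ∈ N.V p := by
  have hp := h (.prop p) (.prop p)
  simp only [mem_eval_prop, hu, hv, true_and] at hp
  exact hp

theorem sentenceEquiv_child (hu : u ∈ M.S) (hv : v ∈ N.S) (h : SentenceEquivUnder M N e u v)
    {n : ℕ} {a : M.Idx} {b : N.Idx} (hn : e n = some (a, b)) :
    SentenceEquiv (M.child a) (M.T u a) (N.child b) (N.T v b) := by
  intro φ hφ
  have hχ := h (φ.qmv n) (Fm.IsSentenceIn.qmv hφ (by simp [hn]))
  simpa [Sat, mem_eval_qmv, hu, hv, hn] using hχ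

theorem constant_cases (hu : u ∈ M.S) (hv : v ∈ N.S) (hTu : ∀ a, M.T u a ∈ (M.child a).S)
    (hTv : ∀ b, N.T v b ∈ (N.child b).S) (h : SentenceEquivUnder M N e u v) (c : C) :
    (M.I u c = none ∧ N.I v c = none) ∨ ∃ a b, M.I u c = some a ∧ N.I v c = some b ∧
      SentenceEquiv (M.child a) (M.T u a) (N.child b) (N.T v b) := by
  have hqmc : ∀ φ : Fm P C, φ.IsSentence →
      ((∃ a, M.I u c = some a ∧ (M.child a).Sat (M.T u a) φ) ↔
        ∃ b, N.I v c = some b ∧ (N.child b).Sat (N.T v b) φ) := fun φ hφ => by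
    simpa [Sat, mem_eval_qmc, hu, hv] using h (φ.qmc c) (Fm.IsSentenceIn.qmc hφ c)
  have hdef := hqmc .top ⟨rfl, rfl, trivial⟩
  simp only [Sat, mem_eval_top, hTu, hTv, and_true] at hdef
  cases ha : M.I u c with
  | none => cases hb : N.I v c <;> simp_all
  | some a =>
    obtain ⟨b, hb⟩ := hdef.1 ⟨a, ha⟩
    refine .inr ⟨a, b, rfl, hb, fun φ hφ => ?_⟩
    simpa [ha, hb] using hqmc φ hφ

end SentenceEquivUnder

theorem bisim_of_sentenceEquiv (M N : GKM W P C) (hM : M.ImageFinite) (hN : N.ImageFinite)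
    (hMwf : M.WF) (hNwf : N.WF) (s t : W) (hs : s ∈ M.S) (ht : t ∈ N.S)
    (h : SentenceEquiv M s N t) : Bisim M s N t := by
  rw [ImageFinite] at hM hN
  rw [WF] at hMwf hNwf
  obtain ⟨hMfin, hMIdx, hMc⟩ := hM
  obtain ⟨hNfin, hNIdx, hNc⟩ := hN
  obtain ⟨hMR, hMT, hMwfc⟩ := hMwf
  obtain ⟨hNR, hNT, hNwfc⟩ := hNwf
  obtain ⟨e, he, htot, hsurj⟩ := h.sentenceEquivUnder_none.exists_total hs ht
  have ih : ∀ u v a b, u ∈ M.S → v ∈ N.S →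
      SentenceEquiv (M.child a) (M.T u a) (N.child b) (N.T v b) →
      Bisim (M.child a) (M.T u a) (N.child b) (N.T v b) := fun u v a b hu hv =>
    bisim_of_sentenceEquiv _ _ (hMc a) (hNc b) (hMwfc a) (hNwfc b) _ _ (hMT u hu a) (hNT v hv b)
  rw [Bisim]
  refine ⟨fun u v => u ∈ M.S ∧ v ∈ N.S ∧ SentenceEquivUnder M N e u v,
    fun _ _ a b => ∃ n, e n = some (a, b), ⟨hs, ht, he⟩, fun u v h => ⟨h.1, h.2.1⟩,
    fun u v ⟨hu, hv, huv⟩ => huv.mem_V_iff hu hv, ?_, ?_, ?_, ?_, ?_, ?_⟩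
  · rintro u v - a
    obtain ⟨n, b, hn⟩ := htot a
    exact ⟨b, n, hn⟩
  · rintro u v - b
    obtain ⟨n, a, hn⟩ := hsurj b
    exact ⟨a, n, hn⟩
  · rintro u v ⟨hu, hv, huv⟩ a b ⟨n, hn⟩
    exact ih u v a b hu hv (huv.sentenceEquiv_child hu hv hn)
  · rintro u v ⟨hu, hv, huv⟩ c
    refine (huv.constant_cases hu hv (hMT u hu) (hNT v hv) c).imp id ?_
    rintro ⟨a, b, ha, hb, hab⟩
    exact ⟨a, b, ha, hb, ih u v a b hu hv hab⟩
  · rintro u v ⟨hu, hv, huv⟩ u' hR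
    have hu' := (hMR u u' hR).2
    obtain ⟨v', hv', huv'⟩ := huv.exists_rel (hNfin v hv) (fun t ht => (hNR v t ht).2) hu hu' hR
    exact ⟨v', hv', ⟨hu', (hNR v v' hv').2, huv'⟩, fun _ _ => id⟩
  · rintro u v ⟨hu, hv, huv⟩ v' hR
    have hv' := (hNR v v' hR).2
    obtain ⟨u', hu', hvu'⟩ := (sentenceEquivUnder_swap_iff.2 huv).exists_rel (hMfin u hu)
      (fun t ht => (hMR u t ht).2) hv hv' hR
    exact ⟨u', hu', ⟨(hMR u u' hu').2, hv', sentenceEquivUnder_swap_iff.1 hvu'⟩, fun _ _ => id⟩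
termination_by M
decreasing_by all_goals exact Relation.TransGen.single ⟨_, rfl⟩

end GKM

/-- Hennessy–Milner: image-finite pointed models satisfying the
same FOMC-sentences are bisimilar. -/
theorem stmt13 {W P C : Type} [Countable P] [Countable C]
    (M N : GKM W P C) (hM : M.ImageFinite) (hN : N.ImageFinite)
    (hMwf : M.WF) (hNwf : N.WF) (s t : W) (hs : s ∈ M.S) (ht : t ∈ N.S)
    (h : ∀ φ : Fm P C, φ.IsSentence → (GKM.Sat M s φ ↔ GKM.Sat N t φ)) :
    GKM.Bisim M s N t :=
  GKM.bisim_of_sentenceEquiv M N hM hN hMwf hNwf s t hs ht h
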